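/- Server's reduced state independence in the Kerenidis et al. protocol: for the state Σ_r (-1)^{r·DB_{b*}} |r⟩_R|r⟩_{R'}|r·DB₀⟩_{Q₀}|r·DB₁⟩_{Q₁} (normalized), the reduced density matrix on the server registers R, Q₀, Q₁ equals (1/2^{n/2}) Σ_r |r⟩⟨r|_R ⊗ |r·DB₀⟩⟨r·DB₀|_{Q₀} ⊗ |r·DB₁⟩⟨r·DB₁|_{Q₁}, which is independent of b*. -/

import Mathlib

/-! Because the client register `R'` is a copy of `R`, tracing it out keeps only the terms
with equal `r` on both sides, so the phase `(-1)^{r·D}` only ever meets its own conjugate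
and each surviving entry is the squared modulus `2^{-m}` of the amplitude. -/

open Matrix Kronecker BigOperators Finset
open scoped ComplexOrder

/-- Trace distance: half the trace norm of the difference. -/
noncomputable def traceDist {d : Type*} [Fintype d] [DecidableEq d]
    (ρ σ : Matrix d d ℂ) : ℝ :=
  (((Matrix.posSemidef_conjTranspose_mul_self (ρ - σ)).isHermitian.eigenvectorUnitary.1 *
      diagonal (((↑) : ℝ → ℂ) ∘ Real.sqrt ∘ (Matrix.posSemidef_conjTranspose_mul_self (ρ - σ)).isHermitian.eigenvalues) *
      (star (Matrix.posSemidef_conjTranspose_mul_self (ρ - σ)).isHermitian.eigenvectorUnitary : Matrix d d ℂ)).trace).re / 2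

/-- A density operator: positive semidefinite with unit trace. -/
def IsDensity {d : Type*} [Fintype d] [DecidableEq d] (ρ : Matrix d d ℂ) : Prop :=
  ρ.PosSemidef ∧ ρ.trace = 1

/-- Rank-one projection `|v⟩⟨v|` onto a vector. -/
def proj {d : Type*} [Fintype d] [DecidableEq d] (v : d → ℂ) : Matrix d d ℂ :=
  Matrix.vecMulVec v (star v)

/-- A unit vector. -/
def IsUnit' {d : Type*} [Fintype d] (v : d → ℂ) : Prop :=
  dotProduct (star v) v = 1

/-- Partial trace over the second tensor factor. -/
noncomputable def ptraceY {X Y : Type*} [Fintype X] [Fintype Y] [DecidableEq X] [DecidableEq Y]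
    (ρ : Matrix (X × Y) (X × Y) ℂ) : Matrix X X ℂ :=
  fun x x' => ∑ y : Y, ρ (x, y) (x', y)

theorem sum_copy_mul_star {X Y R : Type*} [Fintype X] [DecidableEq X] [DecidableEq Y]
    [Semiring R] [StarRing R] (f : X → Y) (α : X → R) (x x' : X) (y y' : Y) :
    ∑ r, (if r = x ∧ y = f x then α x else 0) * star (if r = x' ∧ y' = f x' then α x' else 0)
      = if x' = x ∧ y = f x ∧ y' = y then α x * star (α x) else 0 := by
  rw [Finset.sum_eq_single x (fun r _ hr => by simp [hr]) (by simp)]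
  by_cases hx : x' = x
  · subst hx
    by_cases hy : y = f x' <;> by_cases hy' : y' = f x' <;> simp [hy, hy']
  · simp [Ne.symm hx, hx]

theorem inv_sqrt_mul_neg_one_pow_mul_star (c : ℝ) (hc : 0 ≤ c) (k : ℕ) :
    (Real.sqrt c : ℂ)⁻¹ * (-1) ^ k * star ((Real.sqrt c : ℂ)⁻¹ * (-1) ^ k) = (c : ℂ)⁻¹ := by
  rw [Complex.star_def, Complex.mul_conj, Complex.normSq_mul, Complex.normSq_inv,
    Complex.normSq_ofReal, Real.mul_self_sqrt hc]
  simp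

theorem kerenidis_reduced_state_independent_general
    {m : Type*} [Fintype m] [DecidableEq m]
    (DB₀ DB₁ : m → ZMod 2)
    (D : m → ZMod 2)
    (Ψ : ((m → ZMod 2) × (m → ZMod 2) × ZMod 2 × ZMod 2) → ℂ)
    (hΨ : Ψ = fun p =>
      if p.2.1 = p.1 ∧ p.2.2.1 = (∑ i, p.1 i * DB₀ i) ∧ p.2.2.2 = (∑ i, p.1 i * DB₁ i)
      then ((Real.sqrt (2 ^ Fintype.card m) : ℂ))⁻¹ *
        (-1 : ℂ) ^ (∑ i, p.1 i * D i : ZMod 2).val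
      else 0) :
    (fun (a b : (m → ZMod 2) × ZMod 2 × ZMod 2) =>
        ∑ r' : m → ZMod 2,
          Ψ (a.1, r', a.2.1, a.2.2) * star (Ψ (b.1, r', b.2.1, b.2.2)))
      = fun a b =>
        if b.1 = a.1 ∧ a.2.1 = (∑ i, a.1 i * DB₀ i) ∧ a.2.2 = (∑ i, a.1 i * DB₁ i)
            ∧ b.2.1 = a.2.1 ∧ b.2.2 = a.2.2
        then ((2 : ℂ) ^ Fintype.card m)⁻¹ else 0 := by
  subst hΨ
  funext ⟨r, q⟩ ⟨s, q'⟩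
  have h := sum_copy_mul_star (fun r => (∑ i, r i * DB₀ i, ∑ i, r i * DB₁ i))
    (fun r => (Real.sqrt (2 ^ Fintype.card m) : ℂ)⁻¹ * (-1) ^ (∑ i, r i * D i).val) r s q q'
  rw [inv_sqrt_mul_neg_one_pow_mul_star _ (by positivity)] at h
  simpa only [Prod.ext_iff, and_assoc, Complex.ofReal_pow, Complex.ofReal_ofNat] using h

/-- Server's reduced state independence in the Kerenidis et al. protocol: tracing
out the client register `R'` from the phased state
`Σ_r (-1)^{r·DB_{b*}} |r⟩_R |r⟩_{R'} |r·DB₀⟩_{Q₀} |r·DB₁⟩_{Q₁}` (normalized) gives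
the classical mixture `2^{-m} Σ_r |r⟩⟨r| ⊗ |r·DB₀⟩⟨r·DB₀| ⊗ |r·DB₁⟩⟨r·DB₁|`,
which is independent of `b*`. -/
theorem kerenidis_reduced_state_independent
    {m : Type*} [Fintype m] [DecidableEq m]
    (DB₀ DB₁ : m → ZMod 2) (bstar : Fin 2)
    (D : m → ZMod 2) (hD : D = if bstar = 0 then DB₀ else DB₁)
    (Ψ : ((m → ZMod 2) × (m → ZMod 2) × ZMod 2 × ZMod 2) → ℂ)
    (hΨ : Ψ = fun p =>
      if p.2.1 = p.1 ∧ p.2.2.1 = (∑ i, p.1 i * DB₀ i) ∧ p.2.2.2 = (∑ i, p.1 i * DB₁ i)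
      then ((Real.sqrt (2 ^ Fintype.card m) : ℂ))⁻¹ *
        (-1 : ℂ) ^ (∑ i, p.1 i * D i : ZMod 2).val
      else 0) :
    (fun (a b : (m → ZMod 2) × ZMod 2 × ZMod 2) =>
        ∑ r' : m → ZMod 2,
          Ψ (a.1, r', a.2.1, a.2.2) * star (Ψ (b.1, r', b.2.1, b.2.2)))
      = fun a b =>
        if b.1 = a.1 ∧ a.2.1 = (∑ i, a.1 i * DB₀ i) ∧ a.2.2 = (∑ i, a.1 i * DB₁ i)
            ∧ b.2.1 = a.2.1 ∧ b.2.2 = a.2.2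
        then ((2 : ℂ) ^ Fintype.card m)⁻¹ else 0 :=
  kerenidis_reduced_state_independent_general DB₀ DB₁ D Ψ hΨ
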